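/- For all integers n ≥ k ≥ 0, the (q,r)-Whitney numbers of the second kind satisfy the vertical recurrence relation W_{m,r}[n+1,k+1]_q = q^{mk+r} · Σ_{j=k}^{n} ([m(k+1)+r]_q)^{n−j} · W_{m,r}[j,k]_q. -/

import Mathlib

open Finset

/-- The `q`-integer `[s]_q = (q^s - 1)/(q - 1)` for an integer `s`. -/
noncomputable def qint (q : ℝ) (s : ℤ) : ℝ := (q ^ s - 1) / (q - 1)

/-- The `(q,r)`-Whitney numbers of the second kind `W_{m,r}[n,k]_q`, with `r : ℤ` so
that both `W_{m,r}` and `W_{m,-r}` are covered: `W[0,0] = 1`, `W[n,k] = 0` for `k > n`,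
and `W[n,k] = q^(m(k-1)+r) W[n-1,k-1] + [mk+r]_q W[n-1,k]`. -/
noncomputable def qWhitney2 (q : ℝ) (m : ℕ) (r : ℤ) : ℕ → ℕ → ℝ
  | 0, 0 => 1
  | 0, _ + 1 => 0
  | n + 1, 0 => qint q r * qWhitney2 q m r n 0
  | n + 1, k + 1 =>
      q ^ (m * k + r) * qWhitney2 q m r n k
        + qint q (m * (k + 1) + r) * qWhitney2 q m r n (k + 1)

/-!
For fixed `k`, the column `n ↦ W[n, k+1]` obeys the first-order linear recurrence
`x (n+1) = [m(k+1)+r]_q · x n + q^(mk+r) · W[n, k]` and vanishes at `n = k`; unrolling it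
from there gives the sum.
-/

theorem eq_sum_pow_mul_of_succ_eq_mul_add {R : Type*} [CommSemiring R] {x y : ℕ → R} {c : R}
    {k : ℕ} (hk : x k = 0) (hxy : ∀ n, k ≤ n → x (n + 1) = c * x n + y n) :
    ∀ n, k ≤ n → x (n + 1) = ∑ j ∈ Icc k n, c ^ (n - j) * y j := by
  intro n hkn
  induction n, hkn using Nat.le_induction with
  | base => simp [hxy k le_rfl, hk]
  | succ n hkn ih =>
    rw [hxy (n + 1) (by omega), ih, sum_Icc_succ_top (by omega), Nat.sub_self, pow_zero, one_mul,
      mul_sum]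
    congr 1
    refine sum_congr rfl fun j hj => ?_
    rw [show n + 1 - j = n - j + 1 by have := (mem_Icc.mp hj).2; omega, pow_succ']
    ring

theorem qWhitney2_eq_zero_of_lt (q : ℝ) (m : ℕ) (r : ℤ) :
    ∀ {n k : ℕ}, n < k → qWhitney2 q m r n k = 0
  | 0, _ + 1, _ => rfl
  | n + 1, k + 1, hnk => by
    rw [qWhitney2, qWhitney2_eq_zero_of_lt q m r (by omega : n < k),
      qWhitney2_eq_zero_of_lt q m r (by omega : n < k + 1), mul_zero, mul_zero, add_zero]

theorem qWhitney2_vertical_recurrence_general (q : ℝ) (m r : ℕ)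
    (n k : ℕ) (hkn : k ≤ n) :
    qWhitney2 q m (r : ℤ) (n + 1) (k + 1) =
      q ^ (m * k + r) *
        ∑ j ∈ Finset.Icc k n,
          qint q (m * (k + 1) + r) ^ (n - j) * qWhitney2 q m (r : ℤ) j k := by
  have hstep : ∀ j, k ≤ j → qWhitney2 q m r (j + 1) (k + 1) =
      qint q (m * (k + 1) + r) * qWhitney2 q m r j (k + 1)
        + q ^ (m * k + r) * qWhitney2 q m r j k := by
    intro j _
    rw [qWhitney2, add_comm]
    norm_cast
  rw [eq_sum_pow_mul_of_succ_eq_mul_add (x := fun j ↦ qWhitney2 q m r j (k + 1))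
    (qWhitney2_eq_zero_of_lt q m r k.lt_succ_self) hstep n hkn, mul_sum]
  exact sum_congr rfl fun j _ => by ring

theorem qWhitney2_vertical_recurrence (q : ℝ) (hq : 0 < q) (hq1 : q ≠ 1) (m r : ℕ) (hm : 0 < m) (hr : 0 < r)
    (n k : ℕ) (hkn : k ≤ n) :
    qWhitney2 q m (r : ℤ) (n + 1) (k + 1) =
      q ^ (m * k + r) *
        ∑ j ∈ Finset.Icc k n,
          qint q (m * (k + 1) + r) ^ (n - j) * qWhitney2 q m (r : ℤ) j k :=
  qWhitney2_vertical_recurrence_general q m r n k hkn
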